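/- arXiv:1707.09950 — 4 statements merged into one kernel-verified Lean document; each statement's English description precedes it below -/
import Mathlib

section
/- The operator K extends to a bounded linear operator on the complex Hilbert space L²(S¹) (with respect to the arclength measure) with operator norm at most 1, and this operator is self-adjoint: for all f, g ∈ L²(S¹), ⟨K f, g⟩ = ⟨f, K g⟩. -/
open MeasureTheory Real

noncomputable section

/-- The unit circle, modelled as `ℝ / 2πℤ`, carrying the arclength measure
(total mass `2π`). -/
abbrev S1 : Type := AddCircle (2 * π)

instance : Fact ((0:ℝ) < 2 * π) := ⟨by positivity⟩

/-- The gain operator of the two-dimensional hard-disk linear Boltzmann equation: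
`(K f)(v(θ)) = (1/2) ∫_{−1}^{1} f(v(θ + π − 2 arcsin δ)) dδ`. -/
def Kop (f : S1 → ℂ) (θ : S1) : ℂ :=
  (1 / 2 : ℂ) * ∫ δ in (-1:ℝ)..1, f (θ + ((π - 2 * arcsin δ : ℝ) : S1))

/-!
With `y = π - 2 arcsin δ` the deflection angle, `Kop f θ = ∫ f (θ + y) dρ(y)`, where `ρ` is the law
of `y` when the impact parameter `δ` is uniform on `[-1, 1]`: `K` averages the translates of `f`
against a probability measure, and `ρ` is symmetric under `y ↦ -y` because `arcsin` is odd.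

Averaging translates against a probability measure contracts `Lᵖ` of any translation-invariant
measure `μ`, `1 ≤ p < ∞`: Jensen's inequality in `y`, then Tonelli and invariance of `μ`, bound
`‖K f‖ₚᵖ` by `‖f‖ₚᵖ`. When `ρ` is symmetric, the measure-preserving involution
`(x, y) ↦ (x + y, -y)` of `μ × ρ` exchanges `⟪f (x + y), g x⟫` and `⟪f x, g (x + y)⟫`, the
integrands of `⟪K f, g⟫` and `⟪f, K g⟫`.
-/

open scoped ENNReal InnerProductSpace

namespace MeasureTheory

section Sections

variable {α β E : Type*} [MeasurableSpace α] [MeasurableSpace β] {μ : Measure α} {ν : Measure β}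
  [SFinite ν] [NormedAddCommGroup E] {H : α × β → E}

theorem lintegral_eLpNorm'_prodMk_left_rpow (hH : AEStronglyMeasurable H (μ.prod ν)) {q : ℝ}
    (hq : 0 < q) :
    ∫⁻ x, eLpNorm' (fun y => H (x, y)) q ν ^ q ∂μ = eLpNorm' H q (μ.prod ν) ^ q := by
  simp_rw [← lintegral_rpow_enorm_eq_rpow_eLpNorm' hq]
  exact (lintegral_prod _ (hH.enorm.pow_const q)).symm

theorem MemLp.ae_memLp_prodMk_left {p : ℝ≥0∞} (hH : MemLp H p (μ.prod ν)) (hp0 : p ≠ 0)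
    (hp : p ≠ ∞) : ∀ᵐ x ∂μ, MemLp (fun y => H (x, y)) p ν := by
  have hq : 0 < p.toReal := ENNReal.toReal_pos hp0 hp
  have hfin : ∫⁻ x, eLpNorm' (fun y => H (x, y)) p.toReal ν ^ p.toReal ∂μ ≠ ∞ := by
    rw [lintegral_eLpNorm'_prodMk_left_rpow hH.1 hq, ← eLpNorm_eq_eLpNorm' hp0 hp]
    exact ENNReal.rpow_ne_top_of_nonneg hq.le hH.eLpNorm_ne_top
  have hmeas : AEMeasurable (fun x => eLpNorm' (fun y => H (x, y)) p.toReal ν ^ p.toReal) μ := by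
    simp_rw [← lintegral_rpow_enorm_eq_rpow_eLpNorm' hq]
    exact (hH.1.enorm.pow_const _).lintegral_prod_right'
  filter_upwards [ae_lt_top' hmeas hfin, hH.1.prodMk_left] with x hx hxm
  refine ⟨hxm, ?_⟩
  rw [eLpNorm_eq_eLpNorm' hp0 hp]
  exact (ENNReal.rpow_lt_top_iff_of_pos hq).mp hx

theorem eLpNorm_integral_prodMk_left_le [NormedSpace ℝ E] [IsProbabilityMeasure ν]
    (hH : AEStronglyMeasurable H (μ.prod ν)) {p : ℝ≥0∞} (hp1 : 1 ≤ p) (hp : p ≠ ∞) :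
    eLpNorm (fun x => ∫ y, H (x, y) ∂ν) p μ ≤ eLpNorm H p (μ.prod ν) := by
  have hp0 : p ≠ 0 := (zero_lt_one.trans_le hp1).ne'
  have hq : 0 < p.toReal := ENNReal.toReal_pos hp0 hp
  have hsection : ∀ᵐ x ∂μ, ‖∫ y, H (x, y) ∂ν‖ₑ ≤ eLpNorm' (fun y => H (x, y)) p.toReal ν := by
    filter_upwards [hH.prodMk_left] with x hx
    calc ‖∫ y, H (x, y) ∂ν‖ₑ ≤ eLpNorm (fun y => H (x, y)) 1 ν := by
          rw [eLpNorm_one_eq_lintegral_enorm]; exact enorm_integral_le_lintegral_enorm _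
      _ ≤ eLpNorm (fun y => H (x, y)) p ν := eLpNorm_le_eLpNorm_of_exponent_le hp1 hx
      _ = eLpNorm' (fun y => H (x, y)) p.toReal ν := eLpNorm_eq_eLpNorm' hp0 hp
  rw [eLpNorm_eq_eLpNorm' hp0 hp, eLpNorm_eq_eLpNorm' hp0 hp,
    ← ENNReal.rpow_le_rpow_iff hq, ← lintegral_rpow_enorm_eq_rpow_eLpNorm' hq,
    ← lintegral_eLpNorm'_prodMk_left_rpow hH hq]
  exact lintegral_mono_ae (hsection.mono fun x hx => ENNReal.rpow_le_rpow hx hq.le)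

end Sections

def translateAvg {G E : Type*} [MeasurableSpace G] [Add G] [NormedAddCommGroup E]
    [NormedSpace ℝ E] (ρ : Measure G) (f : G → E) (x : G) : E :=
  ∫ y, f (x + y) ∂ρ

theorem translateAvg_smul {G E 𝕜 : Type*} [MeasurableSpace G] [Add G] [NormedAddCommGroup E]
    [NormedSpace ℝ E] [NormedField 𝕜] [NormedSpace 𝕜 E] [SMulCommClass ℝ 𝕜 E] {ρ : Measure G}
    (c : 𝕜) (f : G → E) : translateAvg ρ (c • f) = c • translateAvg ρ f :=
  funext fun x => integral_smul c fun y => f (x + y)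

section TranslateAverage

variable {G E : Type*} [MeasurableSpace G] [AddCommGroup G] [MeasurableAdd₂ G]
  {μ ρ : Measure G} [SFinite μ] [μ.IsAddRightInvariant] [IsProbabilityMeasure ρ]
  [NormedAddCommGroup E] {f g : G → E} {p : ℝ≥0∞}

variable (μ ρ) in
theorem measurePreserving_fst_add_snd :
    MeasurePreserving (fun z : G × G => z.1 + z.2) (μ.prod ρ) μ :=
  (measurePreserving_fst (ν := ρ)).comp (measurePreserving_add_prod μ ρ)

theorem MemLp.comp_add_prod (hf : MemLp f p μ) :
    MemLp (fun z : G × G => f (z.1 + z.2)) p (μ.prod ρ) :=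
  hf.comp_measurePreserving (measurePreserving_fst_add_snd μ ρ)

theorem MemLp.ae_integrable_comp_add (hf : MemLp f p μ) (hp1 : 1 ≤ p) (hp : p ≠ ∞) :
    ∀ᵐ x ∂μ, Integrable (fun y => f (x + y)) ρ := by
  filter_upwards [(hf.comp_add_prod (ρ := ρ)).ae_memLp_prodMk_left
    (zero_lt_one.trans_le hp1).ne' hp] with x hx
  exact hx.integrable hp1

variable [NormedSpace ℝ E]

theorem translateAvg_congr_ae (h : f =ᵐ[μ] g) : translateAvg ρ f =ᵐ[μ] translateAvg ρ g := by
  have hprod := (measurePreserving_fst_add_snd μ ρ).quasiMeasurePreserving.ae_eq_comp h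
  filter_upwards [Measure.ae_ae_of_ae_prod hprod] with x hx
  exact integral_congr_ae hx

theorem eLpNorm_translateAvg_le (hf : AEStronglyMeasurable f μ) (hp1 : 1 ≤ p) (hp : p ≠ ∞) :
    eLpNorm (translateAvg ρ f) p μ ≤ eLpNorm f p μ := by
  have hmp := measurePreserving_fst_add_snd μ ρ
  calc eLpNorm (translateAvg ρ f) p μ ≤ eLpNorm (f ∘ fun z : G × G => z.1 + z.2) p (μ.prod ρ) :=
        eLpNorm_integral_prodMk_left_le (hf.comp_measurePreserving hmp) hp1 hp
    _ = eLpNorm f p μ := eLpNorm_comp_measurePreserving hf hmp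

theorem MemLp.translateAvg (hf : MemLp f p μ) (hp1 : 1 ≤ p) (hp : p ≠ ∞) :
    MemLp (translateAvg ρ f) p μ :=
  ⟨(hf.comp_add_prod (ρ := ρ)).1.integral_prod_right',
    (eLpNorm_translateAvg_le hf.1 hp1 hp).trans_lt hf.2⟩

theorem translateAvg_add_ae (hf : MemLp f p μ) (hg : MemLp g p μ) (hp1 : 1 ≤ p) (hp : p ≠ ∞) :
    translateAvg ρ (f + g) =ᵐ[μ] translateAvg ρ f + translateAvg ρ g := by
  filter_upwards [hf.ae_integrable_comp_add (ρ := ρ) hp1 hp,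
    hg.ae_integrable_comp_add (ρ := ρ) hp1 hp] with x hfx hgx
  exact integral_add hfx hgx

end TranslateAverage

section TranslateAverageLp

variable {G E : Type*} (𝕜 : Type*) [MeasurableSpace G] [AddCommGroup G] [MeasurableAdd₂ G]
  (μ : Measure G) [SFinite μ] [μ.IsAddRightInvariant] [NormedAddCommGroup E] [NormedSpace ℝ E]
  [NontriviallyNormedField 𝕜] [NormedSpace 𝕜 E] [SMulCommClass ℝ 𝕜 E]

def translateAvgLp (ρ : Measure G) [IsProbabilityMeasure ρ] (p : ℝ≥0∞) [Fact (1 ≤ p)]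
    (hp : p ≠ ∞) : Lp E p μ →L[𝕜] Lp E p μ :=
  LinearMap.mkContinuous
    { toFun := fun f => ((Lp.memLp f).translateAvg (ρ := ρ) Fact.out hp).toLp _
      map_add' := fun f g => by
        rw [← MemLp.toLp_add]
        exact MemLp.toLp_congr _ _ ((translateAvg_congr_ae (Lp.coeFn_add f g)).trans
          (translateAvg_add_ae (Lp.memLp f) (Lp.memLp g) Fact.out hp))
      map_smul' := fun c f => by
        rw [RingHom.id_apply, ← MemLp.toLp_const_smul]
        refine MemLp.toLp_congr _ _ ((translateAvg_congr_ae (Lp.coeFn_smul c f)).trans ?_)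
        rw [translateAvg_smul] }
    1 fun f => by
      rw [one_mul, LinearMap.coe_mk, AddHom.coe_mk, Lp.norm_toLp, Lp.norm_def]
      exact ENNReal.toReal_mono (Lp.eLpNorm_ne_top f)
        (eLpNorm_translateAvg_le (Lp.aestronglyMeasurable f) Fact.out hp)

variable {𝕜 μ} {ρ : Measure G} [IsProbabilityMeasure ρ] {p : ℝ≥0∞} [Fact (1 ≤ p)]

theorem coeFn_translateAvgLp (hp : p ≠ ∞) (f : Lp E p μ) :
    translateAvgLp 𝕜 μ ρ p hp f =ᵐ[μ] translateAvg ρ f :=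
  ((Lp.memLp f).translateAvg Fact.out hp).coeFn_toLp

theorem norm_translateAvgLp_le (hp : p ≠ ∞) : ‖translateAvgLp (E := E) 𝕜 μ ρ p hp‖ ≤ 1 :=
  LinearMap.mkContinuous_norm_le _ zero_le_one _

end TranslateAverageLp

section SelfAdjoint

variable {G E 𝕜 : Type*} [MeasurableSpace G] [AddCommGroup G] [MeasurableAdd₂ G]
  {μ ρ : Measure G} [SFinite μ] [μ.IsAddRightInvariant]

theorem integral_comp_add_prod_neg [MeasurableNeg G] [SFinite ρ] [ρ.IsNegInvariant]
    [NormedAddCommGroup E] [NormedSpace ℝ E] (Φ : G × G → E) :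
    ∫ z, Φ (z.1 + z.2, -z.2) ∂(μ.prod ρ) = ∫ z, Φ z ∂(μ.prod ρ) := by
  have hmp : MeasurePreserving (fun z : G × G => (z.1 + z.2, -z.2)) (μ.prod ρ) (μ.prod ρ) :=
    ((MeasurePreserving.id μ).prod (Measure.measurePreserving_neg ρ)).comp
      (measurePreserving_add_prod μ ρ)
  have hinv : Function.Involutive fun z : G × G => (z.1 + z.2, -z.2) := fun z => by simp
  exact MeasurePreserving.integral_comp' (f := MeasurableEquiv.ofInvolutive _ hinv hmp.measurable)
    hmp Φ

variable [IsProbabilityMeasure ρ] [RCLike 𝕜] [NormedAddCommGroup E] [InnerProductSpace 𝕜 E]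
  [NormedSpace ℝ E] [IsScalarTower ℝ 𝕜 E] [CompleteSpace E]

theorem inner_translateAvgLp_left (f g : Lp E 2 μ) :
    ⟪translateAvgLp 𝕜 μ ρ 2 ENNReal.ofNat_ne_top f, g⟫_𝕜
      = ∫ z, ⟪f (z.1 + z.2), g z.1⟫_𝕜 ∂(μ.prod ρ) := by
  have hadd := measurePreserving_fst_add_snd μ ρ
  have hfst := measurePreserving_fst (μ := μ) (ν := ρ)
  have hint : Integrable (fun z : G × G => ⟪f (z.1 + z.2), g z.1⟫_𝕜) (μ.prod ρ) := by
    refine (L2.integrable_inner (Lp.compMeasurePreserving _ hadd f)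
      (Lp.compMeasurePreserving _ hfst g)).congr ?_
    filter_upwards [Lp.coeFn_compMeasurePreserving f hadd,
      Lp.coeFn_compMeasurePreserving g hfst] with z hfz hgz
    rw [hfz, hgz, Function.comp_apply, Function.comp_apply]
  rw [integral_prod _ hint, L2.inner_def]
  refine integral_congr_ae ?_
  filter_upwards [coeFn_translateAvgLp (𝕜 := 𝕜) (ρ := ρ) ENNReal.ofNat_ne_top f,
    (Lp.memLp f).ae_integrable_comp_add (ρ := ρ) one_le_two ENNReal.ofNat_ne_top] with x hTx hfx
  rw [hTx, translateAvg, ← inner_conj_symm, ← integral_inner hfx, ← integral_conj]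
  simp_rw [inner_conj_symm]

theorem inner_translateAvgLp_comm [MeasurableNeg G] [ρ.IsNegInvariant] (f g : Lp E 2 μ) :
    ⟪translateAvgLp 𝕜 μ ρ 2 ENNReal.ofNat_ne_top f, g⟫_𝕜
      = ⟪f, translateAvgLp 𝕜 μ ρ 2 ENNReal.ofNat_ne_top g⟫_𝕜 := by
  rw [← inner_conj_symm f, inner_translateAvgLp_left, inner_translateAvgLp_left, ← integral_conj,
    ← integral_comp_add_prod_neg]
  simp_rw [inner_conj_symm, add_neg_cancel_right]

end SelfAdjoint

end MeasureTheory

section Scattering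

open ProbabilityTheory Set

def deflection (δ : ℝ) : S1 := ((π - 2 * arcsin δ : ℝ) : S1)

theorem measurable_deflection : Measurable deflection := by
  unfold deflection; fun_prop

theorem deflection_neg (δ : ℝ) : deflection (-δ) = -deflection δ := by
  have h : π - 2 * arcsin (-δ) = -(π - 2 * arcsin δ) + 2 * π := by rw [arcsin_neg]; ring
  rw [deflection, deflection, h, AddCircle.coe_add_period, AddCircle.coe_neg]

def deflectionLaw : Measure S1 := (volume[|Icc (-1 : ℝ) 1]).map deflection

instance : IsProbabilityMeasure (volume[|Icc (-1 : ℝ) 1]) :=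
  cond_isProbabilityMeasure_of_finite (by simp) (by simp)

instance : (volume[|Icc (-1 : ℝ) 1]).IsNegInvariant := by
  refine ⟨?_⟩
  have hsymm : Neg.neg ⁻¹' Icc (-1 : ℝ) 1 = Icc (-1) 1 := by
    change -Icc (-1 : ℝ) 1 = _
    rw [Set.neg_Icc, neg_neg]
  rw [Measure.neg, ProbabilityTheory.cond, Measure.map_smul, ← hsymm,
    ← Measure.restrict_map measurable_neg measurableSet_Icc, Measure.map_neg_eq_self, hsymm]

instance : IsProbabilityMeasure deflectionLaw :=
  Measure.isProbabilityMeasure_map measurable_deflection.aemeasurable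

instance : deflectionLaw.IsNegInvariant := by
  refine ⟨?_⟩
  rw [Measure.neg, deflectionLaw, Measure.map_map measurable_neg measurable_deflection]
  have : Neg.neg ∘ deflection = deflection ∘ Neg.neg := funext fun δ => (deflection_neg δ).symm
  rw [this, ← Measure.map_map measurable_deflection measurable_neg, Measure.map_neg_eq_self]

theorem Kop_eq_translateAvg {f : S1 → ℂ} (hf : StronglyMeasurable f) :
    Kop f = translateAvg deflectionLaw f := by
  funext θ
  have hfθ : AEStronglyMeasurable (fun y => f (θ + y)) deflectionLaw :=
    (hf.comp_measurable (measurable_const_add θ)).aestronglyMeasurable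
  rw [Kop, translateAvg, deflectionLaw, integral_map measurable_deflection.aemeasurable hfθ,
    ProbabilityTheory.cond, integral_smul_measure, intervalIntegral.integral_of_le (by norm_num),
    ← integral_Icc_eq_integral_Ioc, Real.volume_Icc]
  norm_num [deflection]

end Scattering

/-- `K` extends to a bounded linear operator on the complex Hilbert
space `L²(S¹)` with operator norm at most `1`, and this operator is self-adjoint. -/
theorem K_extends_to_selfAdjoint_contraction_on_L2 :
    ∃ T : Lp ℂ 2 (volume : Measure S1) →L[ℂ] Lp ℂ 2 (volume : Measure S1),
      (∀ f : Lp ℂ 2 (volume : Measure S1), (T f : S1 → ℂ) =ᵐ[volume] Kop f) ∧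
      ‖T‖ ≤ 1 ∧
      (∀ f g : Lp ℂ 2 (volume : Measure S1),
        (inner ℂ (T f) g : ℂ) = (inner ℂ f (T g) : ℂ)) := by
  refine ⟨translateAvgLp ℂ volume deflectionLaw 2 ENNReal.ofNat_ne_top, fun f => ?_,
    norm_translateAvgLp_le _, inner_translateAvgLp_comm⟩
  rw [Kop_eq_translateAvg (Lp.stronglyMeasurable f)]
  exact coeFn_translateAvgLp _ f
end
end

section
/- The operator K, viewed as a bounded linear operator on L²(S¹) with the arclength measure, is a compact operator. -/
open MeasureTheory Real

noncomputable section

/-!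
The operator `K` commutes with rotations of the circle, so it is diagonal in the Fourier basis:
substituting `δ = sin t` gives `K e^{inθ} = (1 - 4n²)⁻¹ e^{inθ}`. An operator that is diagonal in a
Hilbert basis with eigenvalues tending to zero is the norm limit of its finite-rank truncations,
hence compact.
-/

open Filter Topology
open Complex (I)
open scoped Complex

namespace HilbertBasis

variable {ι 𝕜 E : Type*} [RCLike 𝕜] [NormedAddCommGroup E] [InnerProductSpace 𝕜 E]
  (b : HilbertBasis ι 𝕜 E)

theorem hasSum_norm_sq_inner (x : E) : HasSum (fun i => ‖(inner 𝕜 (b i) x : 𝕜)‖ ^ 2) (‖x‖ ^ 2) := by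
  have := (b.hasSum_inner_mul_inner x x).mapL (RCLike.reCLM (K := 𝕜))
  have hterm : ∀ i,
      RCLike.reCLM (inner 𝕜 x (b i) * inner 𝕜 (b i) x) = ‖(inner 𝕜 (b i) x : 𝕜)‖ ^ 2 := by
    intro i
    rw [RCLike.reCLM_apply, ← inner_conj_symm x, RCLike.conj_mul]
    norm_cast
  simpa only [hterm, RCLike.reCLM_apply, inner_self_eq_norm_sq] using this

theorem norm_le_of_norm_inner_le {x y : E} {C : ℝ} (hC : 0 ≤ C)
    (h : ∀ i, ‖(inner 𝕜 (b i) y : 𝕜)‖ ≤ C * ‖(inner 𝕜 (b i) x : 𝕜)‖) : ‖y‖ ≤ C * ‖x‖ := by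
  have hsq : ‖y‖ ^ 2 ≤ (C * ‖x‖) ^ 2 := by
    rw [mul_pow]
    refine hasSum_le (fun i => ?_) (b.hasSum_norm_sq_inner y)
      ((b.hasSum_norm_sq_inner x).mul_left (C ^ 2))
    rw [← mul_pow]
    exact pow_le_pow_left₀ (norm_nonneg _) (h i) 2
  exact (pow_le_pow_iff_left₀ (norm_nonneg _) (by positivity) two_ne_zero).mp hsq

theorem inner_apply_of_apply_eq_smul {T : E →L[𝕜] E} {μ : ι → 𝕜} (hT : ∀ i, T (b i) = μ i • b i)
    (i : ι) (x : E) : inner 𝕜 (b i) (T x) = μ i * inner 𝕜 (b i) x := by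
  suffices (innerSL 𝕜 (b i)).comp T = μ i • innerSL 𝕜 (b i) from congr($this x)
  refine ContinuousLinearMap.ext_on
    (Submodule.dense_iff_topologicalClosure_eq_top.2 b.dense_span) ?_
  rintro - ⟨j, rfl⟩
  simp only [ContinuousLinearMap.comp_apply, FunLike.coe_smul, Pi.smul_apply, innerSL_apply_apply,
    hT, inner_smul_right, smul_eq_mul]
  rcases eq_or_ne i j with rfl | hij
  · rfl
  · simp [b.orthonormal.inner_eq_zero hij]

def diagonalTrunc (μ : ι → 𝕜) (s : Finset ι) : E →L[𝕜] E :=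
  ∑ i ∈ s, μ i • (innerSL 𝕜 (b i)).smulRight (b i)

theorem inner_diagonalTrunc_apply [DecidableEq ι] (μ : ι → 𝕜) (s : Finset ι) (j : ι) (x : E) :
    inner 𝕜 (b j) (b.diagonalTrunc μ s x) = if j ∈ s then μ j * inner 𝕜 (b j) x else 0 := by
  simp only [diagonalTrunc, FunLike.coe_sum, Finset.sum_apply, FunLike.coe_smul, Pi.smul_apply,
    ContinuousLinearMap.smulRight_apply, innerSL_apply_apply, inner_sum, inner_smul_right,
    orthonormal_iff_ite.mp b.orthonormal, mul_ite, mul_one, mul_zero, Finset.sum_ite_eq]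

theorem isCompactOperator_diagonalTrunc (μ : ι → 𝕜) (s : Finset ι) :
    IsCompactOperator (b.diagonalTrunc μ s) := by
  refine Submodule.sum_mem (compactOperator (RingHom.id 𝕜) E E) fun i _ =>
    Submodule.smul_mem _ _ ?_
  exact (isCompactOperator_of_locallyCompactSpace_dom (innerSL 𝕜 (b i))).continuous_comp
    (continuous_id.smul continuous_const)

theorem norm_diagonalTrunc_sub_le {T : E →L[𝕜] E} {μ : ι → 𝕜} (hT : ∀ i, T (b i) = μ i • b i)
    {s : Finset ι} {C : ℝ} (hC : 0 ≤ C) (hμ : ∀ i ∉ s, ‖μ i‖ ≤ C) :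
    ‖b.diagonalTrunc μ s - T‖ ≤ C := by
  classical
  refine ContinuousLinearMap.opNorm_le_bound _ hC fun x => b.norm_le_of_norm_inner_le hC fun i => ?_
  rw [sub_apply, inner_sub_right, b.inner_diagonalTrunc_apply,
    b.inner_apply_of_apply_eq_smul hT]
  split_ifs with hi
  · simpa using mul_nonneg hC (norm_nonneg _)
  · rw [zero_sub, norm_neg, norm_mul]
    exact mul_le_mul_of_nonneg_right (hμ i hi) (norm_nonneg _)

theorem isCompactOperator_of_apply_eq_smul [CompleteSpace E] {T : E →L[𝕜] E} {μ : ι → 𝕜}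
    (hT : ∀ i, T (b i) = μ i • b i) (hμ : Tendsto μ cofinite (𝓝 0)) : IsCompactOperator T := by
  refine isCompactOperator_of_tendsto (l := atTop) (F := b.diagonalTrunc μ) ?_
    (Eventually.of_forall (b.isCompactOperator_diagonalTrunc μ))
  rw [Metric.tendsto_nhds]
  intro ε hε
  have hfin : {i | ε / 2 ≤ ‖μ i‖}.Finite := by
    simpa using hμ.eventually (Metric.ball_mem_nhds 0 (half_pos hε))
  filter_upwards [eventually_ge_atTop hfin.toFinset] with s hs
  rw [dist_eq_norm]
  refine (b.norm_diagonalTrunc_sub_le hT (half_pos hε).le fun i hi => ?_).trans_lt (half_lt_self hε)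
  by_contra h
  exact hi (hs (hfin.mem_toFinset.2 (not_le.1 h).le))

end HilbertBasis

theorem fourier_coe_eq_exp (n : ℤ) (x : ℝ) : fourier n (x : S1) = cexp (I * n * x) := by
  rw [fourier_coe_apply]
  congr 1
  push_cast
  field_simp

theorem fourier_apply_add {T : ℝ} (n : ℤ) (x y : AddCircle T) :
    fourier n (x + y) = fourier n x * fourier n y := by
  simp_rw [fourier_apply, smul_add, AddCircle.toCircle_add, Circle.coe_mul]

theorem integral_neg_one_one_eq_integral_cos_smul_comp_sin {E : Type*} [NormedAddCommGroup E]
    [NormedSpace ℝ E] [CompleteSpace E] {g : ℝ → E} (hg : Continuous g) :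
    ∫ δ in (-1:ℝ)..1, g δ = ∫ t in (-(π / 2))..(π / 2), Real.cos t • g (Real.sin t) := by
  have h := intervalIntegral.integral_deriv_smul_comp (a := -(π / 2)) (b := π / 2)
    (fun x _ => Real.hasDerivAt_sin x) Real.continuous_cos.continuousOn hg
  rw [Real.sin_neg, Real.sin_pi_div_two] at h
  exact h.symm

theorem hasDerivAt_exp_mul_sin_sub_cos (n : ℤ) (t : ℝ) :
    HasDerivAt
      (fun t : ℝ => cexp (I * n * (π - 2 * t)) * (Complex.sin t - 2 * I * n * Complex.cos t))
      ((1 - 4 * (n : ℂ) ^ 2) * (Complex.cos t * cexp (I * n * (π - 2 * t)))) t := by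
  refine HasDerivAt.comp_ofReal
    (e := fun z => cexp (I * n * (π - 2 * z)) * (Complex.sin z - 2 * I * n * Complex.cos z)) ?_
  have h := ((((hasDerivAt_id (t : ℂ)).const_mul 2).const_sub (π : ℂ)).const_mul
    (I * n)).cexp.mul
    ((Complex.hasDerivAt_sin (t : ℂ)).sub ((Complex.hasDerivAt_cos (t : ℂ)).const_mul (2 * I * n)))
  refine h.congr_deriv ?_
  simp only [id, Pi.sub_apply, mul_one]
  linear_combination (4 * (n : ℂ) ^ 2 * Complex.cos t * cexp (I * n * (π - 2 * t))) * Complex.I_sq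

theorem integral_cos_mul_exp (n : ℤ) :
    ∫ t in (-(π / 2))..(π / 2), Complex.cos t * cexp (I * n * (π - 2 * t))
      = 2 * (1 - 4 * (n : ℂ) ^ 2)⁻¹ := by
  have hne : (1 - 4 * (n : ℂ) ^ 2) ≠ 0 := by
    norm_cast
    omega
  have hint := intervalIntegral.integral_eq_sub_of_hasDerivAt (a := -(π / 2)) (b := π / 2)
    (fun t _ => hasDerivAt_exp_mul_sin_sub_cos n t)
    (Continuous.intervalIntegrable (by fun_prop) _ _)
  rw [intervalIntegral.integral_const_mul] at hint
  have hplus : cexp (I * n * (π - 2 * (π / 2 : ℂ))) = 1 := by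
    rw [show I * n * (π - 2 * (π / 2 : ℂ)) = 0 by ring, Complex.exp_zero]
  have hminus : cexp (I * n * (π - 2 * -(π / 2 : ℂ))) = 1 := by
    rw [show I * n * (π - 2 * -(π / 2 : ℂ)) = n * (2 * π * I) by ring,
      Complex.exp_int_mul_two_pi_mul_I]
  push_cast at hint
  rw [hplus, hminus, Complex.sin_neg, Complex.cos_neg, Complex.sin_pi_div_two,
    Complex.cos_pi_div_two] at hint
  rw [eq_mul_inv_iff_mul_eq₀ hne, mul_comm, hint]
  ring

theorem integral_fourier_reflection (n : ℤ) :
    (1 / 2 : ℂ) * ∫ δ in (-1:ℝ)..1, fourier n (((π - 2 * arcsin δ : ℝ)) : S1)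
      = (1 - 4 * (n : ℂ) ^ 2)⁻¹ := by
  simp_rw [fourier_coe_eq_exp]
  rw [integral_neg_one_one_eq_integral_cos_smul_comp_sin (by fun_prop)]
  have hcongr : Set.EqOn
      (fun t => Real.cos t • cexp (I * n * ((π - 2 * arcsin (Real.sin t) : ℝ) : ℂ)))
      (fun t => Complex.cos t * cexp (I * n * (π - 2 * t)))
      (Set.uIcc (-(π / 2)) (π / 2)) := by
    intro t ht
    rw [Set.uIcc_of_le (by linarith [pi_pos])] at ht
    simp only [Real.arcsin_sin ht.1 ht.2, Complex.real_smul, Complex.ofReal_cos]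
    push_cast
    rfl
  rw [intervalIntegral.integral_congr hcongr, integral_cos_mul_exp]
  ring

theorem Kop_fourier (n : ℤ) (θ : S1) :
    Kop (fourier n) θ = (1 - 4 * (n : ℂ) ^ 2)⁻¹ * fourier n θ := by
  simp_rw [Kop, fourier_apply_add, intervalIntegral.integral_const_mul,
    ← integral_fourier_reflection]
  ring

theorem Kop_congr_ae {f g : S1 → ℂ} (h : f =ᵐ[volume] g) : Kop f =ᵐ[volume] Kop g := by
  let F : S1 × ℝ → S1 := fun p => p.1 + ((π - 2 * arcsin p.2 : ℝ) : S1)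
  have hF : Measure.QuasiMeasurePreserving F (volume.prod volume) volume :=
    QuasiMeasurePreserving.prod_of_left (by fun_prop : Continuous F).measurable
      (ae_of_all _ fun δ =>
        (measurePreserving_add_right volume ((π - 2 * arcsin δ : ℝ) : S1)).quasiMeasurePreserving)
  filter_upwards [Measure.ae_ae_of_ae_prod (hF.ae_eq h)] with θ hθ
  rw [Kop, Kop]
  congr 1
  exact intervalIntegral.integral_congr_ae (by filter_upwards [hθ] with δ hδ _ using hδ)

theorem tendsto_inv_one_sub_four_mul_sq :
    Tendsto (fun n : ℤ => (1 - 4 * (n : ℂ) ^ 2)⁻¹) cofinite (𝓝 0) := by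
  refine tendsto_inv₀_cobounded.comp (tendsto_norm_atTop_iff_cobounded.mp ?_)
  have habs : Tendsto (fun n : ℤ => ‖(n : ℝ)‖) cofinite atTop :=
    tendsto_norm_cocompact_atTop.comp Int.tendsto_coe_cofinite
  refine tendsto_atTop_mono (fun n => ?_) habs
  have hcast : (1 - 4 * (n : ℂ) ^ 2) = ((1 - 4 * (n : ℝ) ^ 2 : ℝ) : ℂ) := by push_cast; ring
  rw [hcast, Complex.norm_real, Real.norm_eq_abs, Real.norm_eq_abs]
  rcases eq_or_ne n 0 with rfl | hn
  · simp
  have h1 : (1 : ℝ) ≤ |(n : ℝ)| := by exact_mod_cast Int.one_le_abs hn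
  have h2 : (1 : ℝ) ≤ (n : ℝ) ^ 2 := by nlinarith [sq_abs (n : ℝ)]
  rw [abs_sub_comm, abs_of_nonneg (by linarith : (0 : ℝ) ≤ 4 * (n : ℝ) ^ 2 - 1)]
  nlinarith [sq_abs (n : ℝ)]

theorem span_toLp_fourier_closure_eq_top {T : ℝ} [Fact (0 < T)] (μ : Measure (AddCircle T))
    [IsFiniteMeasure μ] [μ.WeaklyRegular] {p : ENNReal} [Fact (1 ≤ p)] (hp : p ≠ ⊤) :
    (Submodule.span ℂ (Set.range fun n =>
      ContinuousMap.toLp (E := ℂ) p μ ℂ (fourier n))).topologicalClosure = ⊤ := by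
  convert! (ContinuousMap.toLp_denseRange ℂ μ ℂ hp).topologicalClosure_map_submodule
    span_fourier_closure_eq_top
  rw [Submodule.map_span, Set.range_comp']
  simp only [ContinuousLinearMap.coe_coe]

theorem inner_toLp_fourier_volume (m n : ℤ) :
    inner ℂ (ContinuousMap.toLp (E := ℂ) 2 (volume : Measure S1) ℂ (fourier m))
      (ContinuousMap.toLp (E := ℂ) 2 (volume : Measure S1) ℂ (fourier n))
      = if m = n then ((2 * π : ℝ) : ℂ) else 0 := by
  have h := orthonormal_iff_ite.mp (orthonormal_fourier (T := 2 * π)) m n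
  rw [ContinuousMap.inner_toLp] at h ⊢
  rw [AddCircle.volume_eq_smul_haarAddCircle, integral_smul_measure, h,
    ENNReal.toReal_ofReal (by positivity)]
  split_ifs <;> simp [Complex.real_smul]

-- Mathlib's `fourierBasis` is orthonormal for the Haar probability measure, whereas the
-- arclength measure has total mass `2π`.
def fourierBasisVolume : HilbertBasis ℤ ℂ (Lp ℂ 2 (volume : Measure S1)) :=
  HilbertBasis.mk (v := fun n => ((√(2 * π) : ℝ) : ℂ)⁻¹ •
      ContinuousMap.toLp (E := ℂ) 2 (volume : Measure S1) ℂ (fourier n))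
    (by
      rw [orthonormal_iff_ite]
      intro m n
      rw [inner_smul_left, inner_smul_right, inner_toLp_fourier_volume]
      split_ifs
      · rw [map_inv₀, Complex.conj_ofReal, ← mul_assoc, ← mul_inv, ← Complex.ofReal_mul,
          Real.mul_self_sqrt (by positivity), inv_mul_cancel₀ (by simp [pi_ne_zero])]
      · simp)
    (by
      rw [Set.range_smul,
        Submodule.span_smul_eq_of_isUnit _ _ (by simp [Real.sqrt_eq_zero', pi_pos])]
      exact (span_toLp_fourier_closure_eq_top (volume : Measure S1) (p := 2) (by simp)).ge)

theorem fourierBasisVolume_apply (n : ℤ) :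
    fourierBasisVolume n = ((√(2 * π) : ℝ) : ℂ)⁻¹ •
      ContinuousMap.toLp (E := ℂ) 2 (volume : Measure S1) ℂ (fourier n) := by
  rw [fourierBasisVolume, HilbertBasis.coe_mk]

theorem apply_toLp_fourier_of_ae_eq_Kop
    {T : Lp ℂ 2 (volume : Measure S1) →L[ℂ] Lp ℂ 2 (volume : Measure S1)}
    (hT : ∀ f : Lp ℂ 2 (volume : Measure S1), (T f : S1 → ℂ) =ᵐ[volume] Kop f) (n : ℤ) :
    T (ContinuousMap.toLp (E := ℂ) 2 volume ℂ (fourier n))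
      = (1 - 4 * (n : ℂ) ^ 2)⁻¹ • ContinuousMap.toLp (E := ℂ) 2 volume ℂ (fourier n) := by
  have hfourier := ContinuousMap.coeFn_toLp (p := 2) (𝕜 := ℂ) (volume : Measure S1) (fourier n)
  refine Lp.ext ((hT _).trans ((Kop_congr_ae hfourier).trans ?_))
  filter_upwards [Lp.coeFn_smul (1 - 4 * (n : ℂ) ^ 2)⁻¹
    (ContinuousMap.toLp (E := ℂ) 2 volume ℂ (fourier n)), hfourier] with θ hsmul hθ
  rw [hsmul, Pi.smul_apply, hθ, Kop_fourier, smul_eq_mul]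

/-- the operator `K`, viewed as a bounded linear operator on
`L²(S¹)` (i.e. any bounded operator on `L²(S¹)` representing `K`), is a compact
operator. -/
theorem K_is_compact_on_L2
    (T : Lp ℂ 2 (volume : Measure S1) →L[ℂ] Lp ℂ 2 (volume : Measure S1))
    (hT : ∀ f : Lp ℂ 2 (volume : Measure S1), (T f : S1 → ℂ) =ᵐ[volume] Kop f) :
    IsCompactOperator T := by
  refine fourierBasisVolume.isCompactOperator_of_apply_eq_smul (fun n => ?_)
    tendsto_inv_one_sub_four_mul_sq
  rw [fourierBasisVolume_apply, map_smul, apply_toLp_fourier_of_ae_eq_Kop hT, smul_comm]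
end
end

section
/- For every integrable function f on S¹ and every θ ∈ ℝ, the operator K admits the convolution representation (K f)(v(θ)) = (1/4) ∫_{0}^{2π} sin(β/2) f(v(θ + β)) dβ; in particular K is convolution on the circle with the nonnegative even kernel k(β) = (1/4) sin(β/2), β ∈ [0, 2π], of total integral 1. -/
/-! The substitution `δ = cos (β / 2)` maps `[0, 2π]` antitonically onto `[-1, 1]`; on that range
`π - 2 arcsin (cos (β / 2)) = β` and `dδ = -(1/2) sin (β / 2) dβ`, so the impact-parameter average
defining `K` becomes the integral against `(1/4) sin (β / 2)`. -/

open MeasureTheory Real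

noncomputable section

theorem pi_sub_two_mul_arcsin_cos_half {β : ℝ} (h0 : 0 ≤ β) (h2 : β ≤ 2 * π) :
    π - 2 * arcsin (cos (β / 2)) = β := by
  rw [← sin_pi_div_two_sub, arcsin_sin (by linarith) (by linarith)]
  ring

theorem sin_half_nonneg {β : ℝ} (h0 : 0 ≤ β) (h2 : β ≤ 2 * π) : 0 ≤ sin (β / 2) :=
  sin_nonneg_of_nonneg_of_le_pi (by linarith) (by linarith)

theorem integral_neg_one_one_eq_integral_sin_half_smul_comp_cos_half
    {E : Type*} [NormedAddCommGroup E] [NormedSpace ℝ E] (g : ℝ → E) :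
    ∫ δ in (-1 : ℝ)..1, g δ = ∫ β in (0 : ℝ)..(2 * π), ((1 / 2) * sin (β / 2)) • g (cos (β / 2)) := by
  have hderiv : ∀ β : ℝ, HasDerivAt (fun β => cos (β / 2)) (-(1 / 2) * sin (β / 2)) β := fun β => by
    simpa [mul_comm] using ((hasDerivAt_id β).div_const 2).cos
  have hsubst := intervalIntegral.integral_deriv_smul_comp_of_deriv_nonpos (g := g)
    (by fun_prop : ContinuousOn (fun β : ℝ => cos (β / 2)) (Set.uIcc 0 (2 * π)))
    (fun β _ => hderiv β)
    (fun β hβ => by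
      rw [min_eq_left (by positivity), max_eq_right (by positivity)] at hβ
      nlinarith [sin_half_nonneg hβ.1.le hβ.2.le])
  rw [show 2 * π / 2 = π by ring] at hsubst
  simp only [Function.comp_def, zero_div, cos_zero, cos_pi, neg_mul, neg_smul,
    intervalIntegral.integral_neg] at hsubst
  rw [intervalIntegral.integral_symm, ← hsubst, neg_neg]

theorem Kop_eq_integral_sin_half_mul (f : S1 → ℂ) (θ : S1) :
    Kop f θ = (1 / 4 : ℂ) * ∫ β in (0 : ℝ)..(2 * π), (sin (β / 2) : ℂ) * f (θ + (β : S1)) := by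
  rw [Kop, integral_neg_one_one_eq_integral_sin_half_smul_comp_cos_half,
    intervalIntegral.integral_congr
      (g := fun β : ℝ => (1 / 2 : ℂ) * ((sin (β / 2) : ℂ) * f (θ + β))),
    intervalIntegral.integral_const_mul]
  · ring
  · intro β hβ
    rw [Set.uIcc_of_le (by positivity)] at hβ
    simp only [pi_sub_two_mul_arcsin_cos_half hβ.1 hβ.2, Complex.real_smul]
    push_cast
    ring

theorem integral_sin_half_zero_two_pi : ∫ β in (0 : ℝ)..(2 * π), sin (β / 2) = 4 := by
  rw [intervalIntegral.integral_comp_div sin two_ne_zero, zero_div, show 2 * π / 2 = π by ring,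
    integral_sin, cos_zero, cos_pi]
  norm_num

theorem K_convolution_representation_general
    (f : S1 → ℂ) :
    (∀ θ : S1, Kop f θ
        = (1 / 4 : ℂ) * ∫ β in (0:ℝ)..(2 * π), (sin (β / 2) : ℂ) * f (θ + (β : S1))) ∧
    (∀ β ∈ Set.Icc (0:ℝ) (2 * π), 0 ≤ (1 / 4) * sin (β / 2)) ∧
    (∀ β ∈ Set.Icc (0:ℝ) (2 * π), (1 / 4) * sin ((2 * π - β) / 2) = (1 / 4) * sin (β / 2)) ∧
    (∫ β in (0:ℝ)..(2 * π), (1 / 4) * sin (β / 2)) = 1 := by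
  refine ⟨Kop_eq_integral_sin_half_mul f,
    fun β hβ => mul_nonneg (by norm_num) (sin_half_nonneg hβ.1 hβ.2), fun β _ => ?_, ?_⟩
  · rw [show (2 * π - β) / 2 = π - β / 2 by ring, sin_pi_sub]
  · rw [intervalIntegral.integral_const_mul, integral_sin_half_zero_two_pi]
    norm_num

/-- for every integrable `f` on `S¹` and every `θ`, `K` admits the
convolution representation
`(K f)(v(θ)) = (1/4) ∫₀^{2π} sin(β/2) f(v(θ+β)) dβ`;
the kernel `k(β) = (1/4) sin(β/2)` is nonnegative and even on `[0, 2π]` (as a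
kernel on the circle, i.e. `k(2π − β) = k(β)`) and has total integral `1`. -/
theorem K_convolution_representation
    (f : S1 → ℂ) (hf : Integrable f (volume : Measure S1)) :
    (∀ θ : S1, Kop f θ
        = (1 / 4 : ℂ) * ∫ β in (0:ℝ)..(2 * π), (sin (β / 2) : ℂ) * f (θ + (β : S1))) ∧
    (∀ β ∈ Set.Icc (0:ℝ) (2 * π), 0 ≤ (1 / 4) * sin (β / 2)) ∧
    (∀ β ∈ Set.Icc (0:ℝ) (2 * π), (1 / 4) * sin ((2 * π - β) / 2) = (1 / 4) * sin (β / 2)) ∧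
    (∫ β in (0:ℝ)..(2 * π), (1 / 4) * sin (β / 2)) = 1 :=
  K_convolution_representation_general f
end
end

section
/- Let g₁, g₂ ∈ L²(S¹) be the unique mean-zero solutions of L g_j (v) = v_j for j = 1, 2, where v_j denotes the j-th Cartesian component of v ∈ S¹, and define the diffusion matrix D_{ij} := (1/(2π)) ∫_{S¹} v_i (−g_j(v)) dv. Then the off-diagonal entries vanish, D_{12} = D_{21} = 0, the diagonal entries are equal, D_{11} = D_{22} = D with D = 3/(16λ), and in particular the diffusion coefficient D = (1/(4π)) ∫_{S¹} v · (−L)^{−1} v dv is strictly positive. -/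
open MeasureTheory Real

noncomputable section

/-- The gain operator of the two-dimensional hard-disk linear Boltzmann equation
(acting on real-valued functions):
`(K f)(v(θ)) = (1/2) ∫_{−1}^{1} f(v(θ + π − 2 arcsin δ)) dδ`. -/
def KopR (f : S1 → ℝ) (θ : S1) : ℝ :=
  (1 / 2 : ℝ) * ∫ δ in (-1:ℝ)..1, f (θ + ((π - 2 * arcsin δ : ℝ) : S1))

/-- First Cartesian component `v₁` of `v(θ) = (cos θ, sin θ)` on `S¹`. -/
def ccos : S1 → ℝ := Real.cos_periodic.lift

/-- Second Cartesian component `v₂` of `v(θ) = (cos θ, sin θ)` on `S¹`. -/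
def csin : S1 → ℝ := Real.sin_periodic.lift

/-! The first harmonics `ccos`, `csin` are eigenfunctions of the gain operator with eigenvalue
`-1/3`. Indeed `K` commutes with rotations: rotating `f θ * g (θ + x)` back to `f (θ - x) * g θ`
and exchanging the `θ`- and `δ`-integrals turns `∫ f * K g` into `∫ f * g` times
`(1/2) ∫_{-1}^{1} cos (π - 2 arcsin δ) dδ = -1/3`, the sine part vanishing by oddness.
Hence `∫ f * L g = -(8λ/3) ∫ f * g`, and `L g_j = v_j` gives
`∫ v_i * (-g_j) = (3/(8λ)) ∫ v_i * v_j = (3π/(8λ)) δ_ij`. -/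

@[simp] lemma ccos_coe (x : ℝ) : ccos (x : S1) = cos x := rfl

@[simp] lemma csin_coe (x : ℝ) : csin (x : S1) = sin x := rfl

lemma ccos_add_coe (θ : S1) (x : ℝ) :
    ccos (θ + x) = ccos θ * cos x - csin θ * sin x := by
  induction θ using QuotientAddGroup.induction_on with
  | H y => rw [← AddCircle.coe_add, ccos_coe, ccos_coe, csin_coe, cos_add]

-- Shaped as `f (θ + x) = f θ * cos x - f' θ * sin x` with `f' = -ccos`.
lemma csin_add_coe (θ : S1) (x : ℝ) :
    csin (θ + x) = csin θ * cos x - -ccos θ * sin x := by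
  induction θ using QuotientAddGroup.induction_on with
  | H y => rw [← AddCircle.coe_add, csin_coe, csin_coe, ccos_coe, sin_add]; ring

lemma continuous_ccos : Continuous ccos := continuous_cos.quotient_liftOn' _

lemma continuous_csin : Continuous csin := continuous_sin.quotient_liftOn' _

lemma Continuous.integrable_mul_of_compactSpace {X R : Type*} [TopologicalSpace X] [CompactSpace X]
    [MeasurableSpace X] [OpensMeasurableSpace X] [NormedRing R] [SecondCountableTopologyEither X R]
    {μ : Measure X} {f g : X → R}
    (hf : Continuous f) (hg : Integrable g μ) : Integrable (fun x => f x * g x) μ := by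
  obtain ⟨C, hC⟩ := isCompact_univ.exists_bound_of_continuousOn hf.continuousOn
  exact hg.bdd_mul hf.aestronglyMeasurable (c := C) (ae_of_all _ fun x => hC x trivial)

lemma integral_cos_pi_sub_two_arcsin :
    ∫ δ in (-1:ℝ)..1, cos (π - 2 * arcsin δ) = -(2 / 3) := by
  have h : Set.EqOn (fun δ => cos (π - 2 * arcsin δ)) (fun δ => 2 * δ ^ 2 - 1)
      (Set.uIcc (-1) 1) := by
    intro δ hδ
    rw [Set.uIcc_of_le (by norm_num)] at hδ
    dsimp only
    rw [cos_pi_sub, cos_two_mul, cos_arcsin, sq_sqrt (by nlinarith [hδ.1, hδ.2])]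
    ring
  rw [intervalIntegral.integral_congr h]
  norm_num [integral_pow]

lemma integral_sin_pi_sub_two_arcsin :
    ∫ δ in (-1:ℝ)..1, sin (π - 2 * arcsin δ) = 0 := by
  have hodd : (fun δ => sin (π - 2 * arcsin δ)) = fun δ => sin (2 * arcsin δ) := by
    funext δ; rw [sin_pi_sub]
  have hsymm := intervalIntegral.integral_comp_neg (a := -1) (b := 1) fun δ => sin (2 * arcsin δ)
  simp only [arcsin_neg, mul_neg, sin_neg, intervalIntegral.integral_neg, neg_neg] at hsymm
  rw [hodd]
  linarith

lemma MeasureTheory.Integrable.comp_add_prod {α G E : Type*} [MeasurableSpace α]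
    [MeasurableSpace G] [AddGroup G] [MeasurableAdd₂ G] [NormedAddCommGroup E]
    {μ : Measure G} [SFinite μ] [μ.IsAddRightInvariant] {ν : Measure α} [IsFiniteMeasure ν]
    {g : G → E} (hg : Integrable g μ) {φ : α → G} (hφ : Measurable φ) :
    Integrable (fun p : α × G => g (p.2 + φ p.1)) (ν.prod μ) := by
  have hskew : MeasurePreserving (fun p : α × G => (p.1, p.2 + φ p.1)) (ν.prod μ) (ν.prod μ) :=
    (MeasurePreserving.id ν).skew_product (g := fun a x => x + φ a)
      (measurable_snd.add (hφ.comp measurable_fst))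
      (ae_of_all _ fun a => map_add_right_eq_self μ (φ a))
  exact hskew.integrable_comp_of_integrable (hg.comp_snd ν)

lemma KopR_eq_setIntegral (g : S1 → ℝ) (θ : S1) :
    KopR g θ = (1 / 2) * ∫ δ in Set.Ioc (-1:ℝ) 1, g (θ + ((π - 2 * arcsin δ : ℝ) : S1)) := by
  rw [KopR, intervalIntegral.integral_of_le (by norm_num)]

lemma measurable_coe_pi_sub_two_arcsin : Measurable fun δ : ℝ => ((π - 2 * arcsin δ : ℝ) : S1) :=
  ((AddCircle.continuous_mk' _).comp
    (continuous_const.sub (continuous_const.mul continuous_arcsin))).measurable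

lemma integrable_KopR {g : S1 → ℝ} (hg : Integrable g) : Integrable (KopR g) := by
  have hprod := hg.comp_add_prod (ν := (volume : Measure ℝ).restrict (Set.Ioc (-1) 1))
    measurable_coe_pi_sub_two_arcsin
  simpa only [funext (KopR_eq_setIntegral g)] using hprod.integral_prod_right.const_mul (1 / 2)

section FirstHarmonic

variable {f f' g : S1 → ℝ} (hf : Continuous f) (hf' : Continuous f')
  (hrot : ∀ (θ : S1) (x : ℝ), f (θ + x) = f θ * cos x - f' θ * sin x)
include hf hf' hrot

lemma integral_mul_comp_add_coe (hg : Integrable g) (s : ℝ) :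
    ∫ θ, f θ * g (θ + s) = cos s * (∫ θ, f θ * g θ) + sin s * ∫ θ, f' θ * g θ := by
  have hshift : ∀ θ : S1, f (θ + s + ((-s : ℝ) : S1)) = f θ := fun θ => by
    rw [add_assoc, ← AddCircle.coe_add, add_neg_cancel, AddCircle.coe_zero, add_zero]
  calc ∫ θ, f θ * g (θ + s) = ∫ θ, f (θ + ((-s : ℝ) : S1)) * g θ := by
        simpa only [hshift] using
          integral_add_right_eq_self (fun θ => f (θ + ((-s : ℝ) : S1)) * g θ) (s : S1)
    _ = ∫ θ, (cos s * (f θ * g θ) + sin s * (f' θ * g θ)) := by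
        congr 1; funext θ; rw [hrot, cos_neg, sin_neg]; ring
    _ = _ := by
        rw [integral_add ((hf.integrable_mul_of_compactSpace hg).const_mul _)
          ((hf'.integrable_mul_of_compactSpace hg).const_mul _), integral_const_mul,
          integral_const_mul]

lemma integral_mul_KopR (hg : Integrable g) :
    ∫ θ, f θ * KopR g θ = -(1 / 3) * ∫ θ, f θ * g θ := by
  obtain ⟨C, hC⟩ := isCompact_univ.exists_bound_of_continuousOn hf.continuousOn
  have hprod : Integrable (fun p : ℝ × S1 => f p.2 * g (p.2 + ((π - 2 * arcsin p.1 : ℝ) : S1)))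
      (((volume : Measure ℝ).restrict (Set.Ioc (-1) 1)).prod volume) :=
    (hg.comp_add_prod measurable_coe_pi_sub_two_arcsin).bdd_mul
      (hf.comp continuous_snd).aestronglyMeasurable (c := C) (ae_of_all _ fun p => hC p.2 trivial)
  calc ∫ θ, f θ * KopR g θ
      = 1 / 2 * ∫ θ, ∫ δ in Set.Ioc (-1:ℝ) 1, f θ * g (θ + ((π - 2 * arcsin δ : ℝ) : S1)) := by
        simp only [KopR_eq_setIntegral, ← integral_const_mul, mul_left_comm]
    _ = 1 / 2 * ∫ δ in Set.Ioc (-1:ℝ) 1, ∫ θ, f θ * g (θ + ((π - 2 * arcsin δ : ℝ) : S1)) := by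
        rw [← integral_integral_swap hprod]
    _ = 1 / 2 * ∫ δ in (-1:ℝ)..1, (cos (π - 2 * arcsin δ) * (∫ θ, f θ * g θ)
          + sin (π - 2 * arcsin δ) * ∫ θ, f' θ * g θ) := by
        rw [intervalIntegral.integral_of_le (by norm_num)]
        simp only [integral_mul_comp_add_coe hf hf' hrot hg]
    _ = -(1 / 3) * ∫ θ, f θ * g θ := by
        rw [intervalIntegral.integral_add (Continuous.intervalIntegrable (by fun_prop) _ _)
          (Continuous.intervalIntegrable (by fun_prop) _ _),
          intervalIntegral.integral_mul_const, intervalIntegral.integral_mul_const,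
          integral_cos_pi_sub_two_arcsin, integral_sin_pi_sub_two_arcsin]
        ring

lemma integral_mul_neg_eq_of_collision_eq {lam : ℝ} (hlam : lam ≠ 0) {h : S1 → ℝ}
    (hg : Integrable g) (hsol : ∀ᵐ θ, 2 * lam * (KopR g θ - g θ) = h θ) :
    ∫ θ, f θ * -g θ = 3 / (8 * lam) * ∫ θ, f θ * h θ := by
  have hfg := hf.integrable_mul_of_compactSpace hg
  have hfKg := hf.integrable_mul_of_compactSpace (integrable_KopR hg)
  have hfh : ∫ θ, f θ * h θ = -(8 * lam / 3) * ∫ θ, f θ * g θ := calc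
    ∫ θ, f θ * h θ = ∫ θ, (2 * lam * (f θ * KopR g θ) - 2 * lam * (f θ * g θ)) :=
      integral_congr_ae (hsol.mono fun θ hθ => by simp only [← hθ]; ring)
    _ = -(8 * lam / 3) * ∫ θ, f θ * g θ := by
      rw [integral_sub (hfKg.const_mul _) (hfg.const_mul _), integral_const_mul, integral_const_mul,
        integral_mul_KopR hf hf' hrot hg]
      ring
  simp only [mul_neg, integral_neg, hfh]
  field_simp

end FirstHarmonic

lemma integral_ccos_mul_ccos : ∫ θ : S1, ccos θ * ccos θ = π := by
  rw [← AddCircle.intervalIntegral_preimage (2 * π) 0]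
  simp only [ccos_coe, zero_add, ← sq, integral_cos_sq]
  simp

lemma integral_csin_mul_csin : ∫ θ : S1, csin θ * csin θ = π := by
  rw [← AddCircle.intervalIntegral_preimage (2 * π) 0]
  simp only [csin_coe, zero_add, ← sq, integral_sin_sq]
  simp

lemma integral_ccos_mul_csin : ∫ θ : S1, ccos θ * csin θ = 0 := by
  rw [← AddCircle.intervalIntegral_preimage (2 * π) 0]
  simp only [ccos_coe, csin_coe, zero_add, mul_comm (cos _), integral_sin_mul_cos₁]
  simp

lemma integral_csin_mul_ccos : ∫ θ : S1, csin θ * ccos θ = 0 := by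
  simpa only [mul_comm] using integral_ccos_mul_csin

theorem diffusion_matrix_general
    (lam : ℝ) (hlam : 0 < lam) (g1 g2 : S1 → ℝ)
    (hg1 : MemLp g1 2 (volume : Measure S1))
    (hg1sol : ∀ᵐ θ ∂(volume : Measure S1), 2 * lam * (KopR g1 θ - g1 θ) = ccos θ)
    (hg2 : MemLp g2 2 (volume : Measure S1))
    (hg2sol : ∀ᵐ θ ∂(volume : Measure S1), 2 * lam * (KopR g2 θ - g2 θ) = csin θ) :
    ((1 / (2 * π)) * ∫ θ, ccos θ * (-(g2 θ)) ∂(volume : Measure S1)) = 0 ∧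
    ((1 / (2 * π)) * ∫ θ, csin θ * (-(g1 θ)) ∂(volume : Measure S1)) = 0 ∧
    ((1 / (2 * π)) * ∫ θ, ccos θ * (-(g1 θ)) ∂(volume : Measure S1)) = 3 / (16 * lam) ∧
    ((1 / (2 * π)) * ∫ θ, csin θ * (-(g2 θ)) ∂(volume : Measure S1)) = 3 / (16 * lam) ∧
    0 < (1 / (4 * π)) *
        ∫ θ, (ccos θ * (-(g1 θ)) + csin θ * (-(g2 θ))) ∂(volume : Measure S1) := by
  have hg1 : Integrable g1 := hg1.integrable one_le_two
  have hg2 : Integrable g2 := hg2.integrable one_le_two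
  have hcos (g h : S1 → ℝ) := integral_mul_neg_eq_of_collision_eq (g := g) (h := h)
    continuous_ccos continuous_csin ccos_add_coe hlam.ne'
  have hsin (g h : S1 → ℝ) := integral_mul_neg_eq_of_collision_eq (g := g) (h := h)
    continuous_csin continuous_ccos.neg csin_add_coe hlam.ne'
  have hD : (1 / (2 * π)) * (3 / (8 * lam) * π) = 3 / (16 * lam) := by field_simp; ring
  rw [integral_add (continuous_ccos.integrable_mul_of_compactSpace hg1.fun_neg)
      (continuous_csin.integrable_mul_of_compactSpace hg2.fun_neg),
    hcos _ _ hg1 hg1sol, hcos _ _ hg2 hg2sol, hsin _ _ hg1 hg1sol, hsin _ _ hg2 hg2sol,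
    integral_ccos_mul_ccos, integral_ccos_mul_csin, integral_csin_mul_ccos, integral_csin_mul_csin]
  refine ⟨by simp, by simp, hD, hD, ?_⟩
  positivity

/-- let `g₁, g₂` be the mean-zero `L²`-solutions of `L g_j = v_j`
(`L = 2λ(K − I)`, `v_j` the `j`-th Cartesian component of `v ∈ S¹`), and set
`D_{ij} = (1/(2π)) ∫ v_i (−g_j(v)) dv`. Then `D_{12} = D_{21} = 0`,
`D_{11} = D_{22} = 3/(16λ)`, and in particular the diffusion coefficient
`D = (1/(4π)) ∫ v · (−L)⁻¹ v dv` is strictly positive. -/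
theorem diffusion_matrix
    (lam : ℝ) (hlam : 0 < lam) (g1 g2 : S1 → ℝ)
    (hg1 : MemLp g1 2 (volume : Measure S1))
    (hg1zero : (∫ θ, g1 θ ∂(volume : Measure S1)) = 0)
    (hg1sol : ∀ᵐ θ ∂(volume : Measure S1), 2 * lam * (KopR g1 θ - g1 θ) = ccos θ)
    (hg2 : MemLp g2 2 (volume : Measure S1))
    (hg2zero : (∫ θ, g2 θ ∂(volume : Measure S1)) = 0)
    (hg2sol : ∀ᵐ θ ∂(volume : Measure S1), 2 * lam * (KopR g2 θ - g2 θ) = csin θ) :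
    ((1 / (2 * π)) * ∫ θ, ccos θ * (-(g2 θ)) ∂(volume : Measure S1)) = 0 ∧
    ((1 / (2 * π)) * ∫ θ, csin θ * (-(g1 θ)) ∂(volume : Measure S1)) = 0 ∧
    ((1 / (2 * π)) * ∫ θ, ccos θ * (-(g1 θ)) ∂(volume : Measure S1)) = 3 / (16 * lam) ∧
    ((1 / (2 * π)) * ∫ θ, csin θ * (-(g2 θ)) ∂(volume : Measure S1)) = 3 / (16 * lam) ∧
    0 < (1 / (4 * π)) *
        ∫ θ, (ccos θ * (-(g1 θ)) + csin θ * (-(g2 θ))) ∂(volume : Measure S1) :=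
  diffusion_matrix_general lam hlam g1 g2 hg1 hg1sol hg2 hg2sol
end
end
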